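/- Let D_n = (p_n, e_n, m_n) be the random process with arbitrary initial state (p₀,e₀,m₀) satisfying p₀,e₀,m₀ ≥ 0, p₀+e₀+m₀ = 1, where at each step, independently with probability 1/2 each, D_{n+1} is the variable-node transform (p²+2pe, e²+2pm, m²+2em) or the check-node transform (p²+m², 1-(1-e)², 2pm) of D_n. Define I_n = I(D_n) with I(p,e,m) = (m+p)(1 - h₂(p/(p+m))). Then (I_n) is a supermartingale, i.e., E[I_{n+1} | D_n] ≤ I_n. -/

import Mathlib

open MeasureTheory ProbabilityTheory

/-- Binary entropy function (base 2). -/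
noncomputable def h2 (x : ℝ) : ℝ := -(x * Real.logb 2 x) - (1 - x) * Real.logb 2 (1 - x)

/-- Capacity of the ternary density `(p,e,m)`. -/
noncomputable def Icap (d : ℝ × ℝ × ℝ) : ℝ := (d.2.2 + d.1) * (1 - h2 (d.1 / (d.1 + d.2.2)))

/-- Variable-node transform of a ternary density `(p,e,m)`. -/
def vplus (d : ℝ × ℝ × ℝ) : ℝ × ℝ × ℝ :=
  (d.1^2 + 2*d.1*d.2.1, d.2.1^2 + 2*d.1*d.2.2, d.2.2^2 + 2*d.2.1*d.2.2)

/-- Check-node transform of a ternary density `(p,e,m)`. -/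
def vminus (d : ℝ × ℝ × ℝ) : ℝ × ℝ × ℝ :=
  (d.1^2 + d.2.2^2, 1 - (1 - d.2.1)^2, 2*d.1*d.2.2)

/-! Given `D n`, the independent fair coin `B n` makes `I(D (n+1))` equal to `I(D⁺)` or
`I(D⁻)` with probability `1/2` each, so it suffices that `I(D⁺) + I(D⁻) ≤ 2 I(D)` for every
ternary density `D = (p, e, m)`. Write `C(x, y) = (x + y)(1 - h₂(x / (x + y)))` (`pairCap`), so
that `I(p, e, m) = C(p, m)`. The unquantized polar transform obeys the chain rule
`C(p², m²) + C(p² + m², 2pm) = 2(p + m) C(p, m)`, and `D⁻` is exactly its second half. The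
`(p, m)`-part of `D⁺` is `(p², m²) + 2e (p, m)`; concavity of `h₂` makes `C` subadditive, and `C`
is homogeneous, so `I(D⁺) ≤ C(p², m²) + 2e C(p, m)`. Adding up and using `p + e + m = 1` gives
the claim. -/

open Real

lemma h2_eq_binEntropy_div (x : ℝ) : h2 x = binEntropy x / log 2 := by
  simp only [h2, binEntropy_eq_negMulLog_add_negMulLog_one_sub, negMulLog, logb]
  ring

-- At `x + y = 0` both sides vanish, because `x / 0 = 0` and `log` is even.
lemma mul_binEntropy_div_add (x y : ℝ) :
    (x + y) * binEntropy (x / (x + y)) = negMulLog x + negMulLog y - negMulLog (x + y) := by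
  rcases eq_or_ne (x + y) 0 with h | h
  · obtain rfl : y = -x := by linarith
    simp [negMulLog]
  · have hx := negMulLog_mul (x + y) (x / (x + y))
    have hy := negMulLog_mul (x + y) (y / (x + y))
    have hsum : x / (x + y) + y / (x + y) = 1 := by rw [← add_div, div_self h]
    rw [mul_div_cancel₀ _ h] at hx hy
    rw [binEntropy_eq_negMulLog_add_negMulLog_one_sub, one_sub_div h, add_sub_cancel_left]
    linear_combination -hx - hy - negMulLog (x + y) * hsum

noncomputable def pairCap (x y : ℝ) : ℝ := (x + y) * (1 - h2 (x / (x + y)))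

lemma Icap_eq_pairCap (d : ℝ × ℝ × ℝ) : Icap d = pairCap d.1 d.2.2 := by
  rw [Icap, pairCap, add_comm d.2.2]

lemma pairCap_eq_sub_mul_binEntropy (x y : ℝ) :
    pairCap x y = x + y - (x + y) * binEntropy (x / (x + y)) / log 2 := by
  rw [pairCap, h2_eq_binEntropy_div]
  ring

lemma pairCap_eq (x y : ℝ) :
    pairCap x y = x + y - (negMulLog x + negMulLog y - negMulLog (x + y)) / log 2 := by
  rw [pairCap, h2_eq_binEntropy_div, ← mul_binEntropy_div_add]
  ring

lemma pairCap_mul (c x y : ℝ) : pairCap (c * x) (c * y) = c * pairCap x y := by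
  simp only [pairCap_eq, ← mul_add, negMulLog_mul]
  ring

lemma pairCap_sq_add_pairCap (p m : ℝ) :
    pairCap (p ^ 2) (m ^ 2) + pairCap (p ^ 2 + m ^ 2) (2 * p * m) =
      2 * (p + m) * pairCap p m := by
  have hlog : log 2 ≠ 0 := by positivity
  rw [pairCap_eq, pairCap_eq, pairCap_eq,
    show p ^ 2 + m ^ 2 + 2 * p * m = (p + m) * (p + m) by ring]
  simp only [sq, mul_assoc, negMulLog_mul, show negMulLog 2 = -2 * log 2 by simp [negMulLog]]
  field_simp
  ring

lemma div_add_mem_Icc {x y : ℝ} (hx : 0 ≤ x) (hy : 0 ≤ y) : x / (x + y) ∈ Set.Icc (0 : ℝ) 1 :=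
  ⟨by positivity, div_le_one_of_le₀ (by linarith) (by positivity)⟩

lemma pairCap_nonneg {x y : ℝ} (hxy : 0 ≤ x + y) : 0 ≤ pairCap x y := by
  have := mul_le_mul_of_nonneg_left (binEntropy_le_log_two (p := x / (x + y))) hxy
  rw [pairCap_eq_sub_mul_binEntropy, sub_nonneg, div_le_iff₀ (by positivity)]
  linarith

lemma pairCap_le_add {x y : ℝ} (hx : 0 ≤ x) (hy : 0 ≤ y) : pairCap x y ≤ x + y := by
  obtain ⟨h₀, h₁⟩ := div_add_mem_Icc hx hy
  have := binEntropy_nonneg h₀ h₁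
  rw [pairCap_eq_sub_mul_binEntropy, sub_le_self_iff]
  positivity

lemma mul_binEntropy_div_add_le {x₁ y₁ x₂ y₂ : ℝ} (hx₁ : 0 ≤ x₁) (hy₁ : 0 ≤ y₁) (hx₂ : 0 ≤ x₂)
    (hy₂ : 0 ≤ y₂) :
    (x₁ + y₁) * binEntropy (x₁ / (x₁ + y₁)) + (x₂ + y₂) * binEntropy (x₂ / (x₂ + y₂)) ≤
      (x₁ + x₂ + (y₁ + y₂)) * binEntropy ((x₁ + x₂) / (x₁ + x₂ + (y₁ + y₂))) := by
  rcases (add_nonneg hx₁ hy₁).eq_or_lt with h₁ | h₁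
  · obtain ⟨rfl, rfl⟩ : x₁ = 0 ∧ y₁ = 0 := ⟨by linarith, by linarith⟩
    simp
  rcases (add_nonneg hx₂ hy₂).eq_or_lt with h₂ | h₂
  · obtain ⟨rfl, rfl⟩ : x₂ = 0 ∧ y₂ = 0 := ⟨by linarith, by linarith⟩
    simp
  have hT : 0 < x₁ + y₁ + (x₂ + y₂) := by positivity
  have hjensen := strictConcave_binEntropy.concaveOn.2 (div_add_mem_Icc hx₁ hy₁)
    (div_add_mem_Icc hx₂ hy₂) (div_nonneg h₁.le hT.le) (div_nonneg h₂.le hT.le)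
    (by field_simp)
  have hmix : (x₁ + y₁) / (x₁ + y₁ + (x₂ + y₂)) * (x₁ / (x₁ + y₁)) +
      (x₂ + y₂) / (x₁ + y₁ + (x₂ + y₂)) * (x₂ / (x₂ + y₂)) =
      (x₁ + x₂) / (x₁ + y₁ + (x₂ + y₂)) := by
    field_simp
  simp only [smul_eq_mul, hmix] at hjensen
  calc (x₁ + y₁) * binEntropy (x₁ / (x₁ + y₁)) + (x₂ + y₂) * binEntropy (x₂ / (x₂ + y₂))
      = (x₁ + y₁ + (x₂ + y₂)) * ((x₁ + y₁) / (x₁ + y₁ + (x₂ + y₂)) * binEntropy (x₁ / (x₁ + y₁))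
          + (x₂ + y₂) / (x₁ + y₁ + (x₂ + y₂)) * binEntropy (x₂ / (x₂ + y₂))) := by field_simp
    _ ≤ (x₁ + y₁ + (x₂ + y₂)) * binEntropy ((x₁ + x₂) / (x₁ + y₁ + (x₂ + y₂))) :=
      mul_le_mul_of_nonneg_left hjensen hT.le
    _ = _ := by rw [add_add_add_comm]

lemma pairCap_add_le {x₁ y₁ x₂ y₂ : ℝ} (hx₁ : 0 ≤ x₁) (hy₁ : 0 ≤ y₁) (hx₂ : 0 ≤ x₂)
    (hy₂ : 0 ≤ y₂) : pairCap (x₁ + x₂) (y₁ + y₂) ≤ pairCap x₁ y₁ + pairCap x₂ y₂ := by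
  have h := div_le_div_of_nonneg_right (mul_binEntropy_div_add_le hx₁ hy₁ hx₂ hy₂)
    (log_nonneg one_le_two)
  rw [add_div] at h
  simp only [pairCap_eq_sub_mul_binEntropy]
  linarith

@[fun_prop]
lemma measurable_h2 : Measurable h2 := by
  simp only [funext h2_eq_binEntropy_div]
  fun_prop

lemma measurable_Icap : Measurable Icap := by
  simp only [funext Icap_eq_pairCap, pairCap]
  fun_prop

lemma measurable_vplus : Measurable vplus := by
  unfold vplus
  fun_prop

lemma measurable_vminus : Measurable vminus := by
  unfold vminus
  fun_prop

def IsTernaryDensity (d : ℝ × ℝ × ℝ) : Prop :=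
  0 ≤ d.1 ∧ 0 ≤ d.2.1 ∧ 0 ≤ d.2.2 ∧ d.1 + d.2.1 + d.2.2 = 1

namespace IsTernaryDensity

variable {d : ℝ × ℝ × ℝ}

lemma vplus (hd : IsTernaryDensity d) : IsTernaryDensity (vplus d) := by
  obtain ⟨p, e, m⟩ := d
  obtain ⟨hp, he, hm, hsum⟩ := hd
  simp only [IsTernaryDensity, _root_.vplus] at hsum ⊢
  exact ⟨by positivity, by positivity, by positivity,
    by linear_combination (p + e + m + 1) * hsum⟩

lemma vminus (hd : IsTernaryDensity d) : IsTernaryDensity (vminus d) := by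
  obtain ⟨p, e, m⟩ := d
  obtain ⟨hp, he, hm, hsum⟩ := hd
  simp only [IsTernaryDensity, _root_.vminus] at hsum ⊢
  exact ⟨by positivity, by nlinarith, by positivity,
    by linear_combination (p + m + 1 - e) * hsum⟩

lemma abs_Icap_le_one (hd : IsTernaryDensity d) : |Icap d| ≤ 1 := by
  obtain ⟨hp, he, hm, hsum⟩ := hd
  rw [Icap_eq_pairCap, abs_le]
  constructor
  · linarith [pairCap_nonneg (add_nonneg hp hm)]
  · linarith [pairCap_le_add hp hm]

theorem Icap_vplus_add_Icap_vminus_le (hd : IsTernaryDensity d) :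
    Icap (_root_.vplus d) + Icap (_root_.vminus d) ≤ 2 * Icap d := by
  obtain ⟨p, e, m⟩ := d
  obtain ⟨hp, he, hm, hsum⟩ := hd
  simp only [Icap_eq_pairCap, _root_.vplus, _root_.vminus] at hsum ⊢
  have hmerge : pairCap (p ^ 2 + 2 * p * e) (m ^ 2 + 2 * e * m) ≤
      pairCap (p ^ 2) (m ^ 2) + 2 * e * pairCap p m := by
    calc pairCap (p ^ 2 + 2 * p * e) (m ^ 2 + 2 * e * m)
        = pairCap (p ^ 2 + 2 * e * p) (m ^ 2 + 2 * e * m) := by ring_nf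
      _ ≤ pairCap (p ^ 2) (m ^ 2) + pairCap (2 * e * p) (2 * e * m) :=
        pairCap_add_le (by positivity) (by positivity) (by positivity) (by positivity)
      _ = pairCap (p ^ 2) (m ^ 2) + 2 * e * pairCap p m := by rw [pairCap_mul]
  linear_combination hmerge + pairCap_sq_add_pairCap p m + 2 * pairCap p m * hsum

end IsTernaryDensity

section Probability

variable {Ω : Type*}

lemma condExp_indicator_of_indep {m m₁ mΩ : MeasurableSpace Ω} {μ : Measure Ω}
    [IsFiniteMeasure μ] (hm : m ≤ mΩ) (hm₁ : m₁ ≤ mΩ) (hind : Indep m₁ m μ) {s : Set Ω}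
    (hs : MeasurableSet[m₁] s) {F : Ω → ℝ} (hF : StronglyMeasurable[m] F)
    (hFi : Integrable F μ) :
    μ[s.indicator F | m] =ᵐ[μ] fun ω => μ.real s * F ω := by
  have hsΩ : MeasurableSet s := hm₁ s hs
  have hsplit : s.indicator F = F * s.indicator 1 := by
    ext ω
    by_cases h : ω ∈ s <;> simp [h]
  have hone : Integrable (s.indicator (1 : Ω → ℝ)) μ := (integrable_const 1).indicator hsΩ
  rw [hsplit]
  filter_upwards [condExp_mul_of_stronglyMeasurable_left hF (hsplit ▸ hFi.indicator hsΩ) hone,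
    condExp_indep_eq hm₁ hm ((stronglyMeasurable_one (β := ℝ)).indicator hs) hind]
    with ω hmul hconst
  rw [hmul, Pi.mul_apply, hconst, integral_indicator_one hsΩ, mul_comm]

lemma condExp_ite_of_indepFun [MeasurableSpace Ω] {β : Type*} [MeasurableSpace β]
    {μ : Measure Ω} [IsProbabilityMeasure μ] {B : Ω → Bool} {X : Ω → β} (hB : Measurable B)
    (hX : Measurable X) (hind : IndepFun B X μ) {f g : β → ℝ} (hf : Measurable f)
    (hg : Measurable g) (hfi : Integrable (f ∘ X) μ) (hgi : Integrable (g ∘ X) μ) :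
    μ[fun ω => if B ω then f (X ω) else g (X ω) | MeasurableSpace.comap X inferInstance] =ᵐ[μ]
      fun ω => μ.real {ω | B ω = true} * f (X ω) + (1 - μ.real {ω | B ω = true}) * g (X ω) := by
  set s := {ω | B ω = true}
  have hs : MeasurableSet[MeasurableSpace.comap B inferInstance] s :=
    ⟨{true}, measurableSet_singleton _, rfl⟩
  have hind' := (IndepFun_iff_Indep B X μ).1 hind
  have hsplit : (fun ω => if B ω then f (X ω) else g (X ω)) =
      s.indicator (f ∘ X) + sᶜ.indicator (g ∘ X) := by
    ext ω
    by_cases h : B ω <;> simp [s, h]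
  rw [hsplit]
  have hs' := hB.comap_le s hs
  filter_upwards [condExp_add (hfi.indicator hs') (hgi.indicator hs'.compl) _,
    condExp_indicator_of_indep hX.comap_le hB.comap_le hind' hs
      (hf.comp (comap_measurable X)).stronglyMeasurable hfi,
    condExp_indicator_of_indep hX.comap_le hB.comap_le hind' hs.compl
      (hg.comp (comap_measurable X)).stronglyMeasurable hgi] with ω hadd hfs hgs
  rw [hadd, Pi.add_apply, hfs, hgs, probReal_compl_eq_one_sub hs']
  rfl

end Probability

section RandomRecursion

variable {Ω β : Type*} {B : ℕ → Ω → Bool} {D : ℕ → Ω → β} {f g : β → β} {d₀ : β}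

lemma ite_step_invariant {P : β → Prop} (h₀ : P d₀) (hf : ∀ d, P d → P (f d))
    (hg : ∀ d, P d → P (g d)) (hD0 : ∀ ω, D 0 ω = d₀)
    (hstep : ∀ n ω, D (n + 1) ω = if B n ω then f (D n ω) else g (D n ω)) (n : ℕ) (ω : Ω) :
    P (D n ω) := by
  induction n with
  | zero => rw [hD0]; exact h₀
  | succ n ih => rw [hstep]; split_ifs; exacts [hf _ ih, hg _ ih]

variable [MeasurableSpace β]

lemma measurable_biSup_comap_of_ite_step (hf : Measurable f) (hg : Measurable g)
    (hD0 : ∀ ω, D 0 ω = d₀)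
    (hstep : ∀ n ω, D (n + 1) ω = if B n ω then f (D n ω) else g (D n ω)) (n : ℕ) :
    Measurable[⨆ i ∈ Set.Iio n, MeasurableSpace.comap (B i) inferInstance] (D n) := by
  induction n with
  | zero =>
    rw [funext hD0]
    exact measurable_const
  | succ n ih =>
    rw [funext (hstep n)]
    have hB : Measurable[⨆ i ∈ Set.Iio (n + 1), MeasurableSpace.comap (B i) inferInstance]
        (B n) :=
      .of_comap_le (le_biSup (fun i => MeasurableSpace.comap (B i) inferInstance)
        (Set.mem_Iio.2 n.lt_succ_self))
    have hD := ih.mono (biSup_mono fun i hi => Set.mem_Iio.2 (lt_trans hi n.lt_succ_self)) le_rfl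
    exact Measurable.ite (hB (measurableSet_singleton true)) (hf.comp hD) (hg.comp hD)

variable [MeasurableSpace Ω] {μ : Measure Ω}

lemma measurable_of_ite_step (hB : ∀ n, Measurable (B n)) (hf : Measurable f)
    (hg : Measurable g) (hD0 : ∀ ω, D 0 ω = d₀)
    (hstep : ∀ n ω, D (n + 1) ω = if B n ω then f (D n ω) else g (D n ω)) (n : ℕ) :
    Measurable (D n) :=
  (measurable_biSup_comap_of_ite_step hf hg hD0 hstep n).mono
    (iSup₂_le fun i _ => (hB i).comap_le) le_rfl

lemma indepFun_of_ite_step (hB : ∀ n, Measurable (B n)) (hind : iIndepFun B μ)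
    (hf : Measurable f) (hg : Measurable g) (hD0 : ∀ ω, D 0 ω = d₀)
    (hstep : ∀ n ω, D (n + 1) ω = if B n ω then f (D n ω) else g (D n ω)) (n : ℕ) :
    IndepFun (B n) (D n) μ := by
  rw [IndepFun_iff_Indep]
  have hpast := indep_iSup_of_disjoint (fun i => (hB i).comap_le)
    ((iIndepFun_iff_iIndep _ _ _).1 hind)
    (Set.disjoint_singleton_left.2 (lt_irrefl n) : Disjoint {n} (Set.Iio n))
  rw [iSup_singleton] at hpast
  exact indep_of_indep_of_le_right hpast
    (measurable_iff_comap_le.1 (measurable_biSup_comap_of_ite_step hf hg hD0 hstep n))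

end RandomRecursion

lemma integrable_Icap_comp {Ω : Type*} [MeasurableSpace Ω] {μ : Measure Ω} [IsFiniteMeasure μ]
    {Y : Ω → ℝ × ℝ × ℝ} (hY : Measurable Y) (hd : ∀ ω, IsTernaryDensity (Y ω)) :
    Integrable (fun ω => Icap (Y ω)) μ :=
  .of_bound (measurable_Icap.comp hY).aestronglyMeasurable 1
    (.of_forall fun ω => (hd ω).abs_Icap_le_one)

/-- The capacity process `I_n = I(D_n)` of the quantized polarization process is a
supermartingale: `E[I_{n+1} | D_n] ≤ I_n` almost surely. -/
theorem stmt_11 {Ω : Type*} [MeasurableSpace Ω] (μ : Measure Ω) [IsProbabilityMeasure μ]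
    (B : ℕ → Ω → Bool) (D : ℕ → Ω → ℝ × ℝ × ℝ) (d₀ : ℝ × ℝ × ℝ)
    (hBmeas : ∀ n, Measurable (B n))
    (hBindep : iIndepFun B μ)
    (hBfair : ∀ n, μ {ω | B n ω = true} = 1/2)
    (hd₀ : 0 ≤ d₀.1 ∧ 0 ≤ d₀.2.1 ∧ 0 ≤ d₀.2.2 ∧ d₀.1 + d₀.2.1 + d₀.2.2 = 1)
    (hD0 : ∀ ω, D 0 ω = d₀)
    (hstep : ∀ n ω, D (n+1) ω = if B n ω then vplus (D n ω) else vminus (D n ω)) :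
    ∀ n, μ[(fun ω => Icap (D (n+1) ω)) | MeasurableSpace.comap (D n) inferInstance]
      ≤ᵐ[μ] fun ω => Icap (D n ω) := by
  intro n
  have hdens := ite_step_invariant (P := IsTernaryDensity) hd₀ (fun _ => IsTernaryDensity.vplus)
    (fun _ => IsTernaryDensity.vminus) hD0 hstep n
  have hDn := measurable_of_ite_step hBmeas measurable_vplus measurable_vminus hD0 hstep n
  have hcond := condExp_ite_of_indepFun (hBmeas n) hDn
    (indepFun_of_ite_step hBmeas hBindep measurable_vplus measurable_vminus hD0 hstep n)
    (measurable_Icap.comp measurable_vplus) (measurable_Icap.comp measurable_vminus)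
    (integrable_Icap_comp (measurable_vplus.comp hDn) fun ω => (hdens ω).vplus)
    (integrable_Icap_comp (measurable_vminus.comp hDn) fun ω => (hdens ω).vminus)
  have hfair : μ.real {ω | B n ω = true} = 1 / 2 := by simp [measureReal_def, hBfair n]
  have hnext : (fun ω => Icap (D (n + 1) ω)) =
      fun ω => if B n ω then Icap (vplus (D n ω)) else Icap (vminus (D n ω)) :=
    funext fun ω => by rw [hstep, apply_ite Icap]
  rw [hnext]
  filter_upwards [hcond] with ω hω
  simp only [Function.comp_apply, hfair] at hω
  rw [hω]
  linarith [(hdens ω).Icap_vplus_add_Icap_vminus_le]
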